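/- arXiv:1401.0001 — 3 statements merged into one kernel-verified Lean document; each statement's English description precedes it below -/
import Mathlib

section
/- Let C₁ and C₂ be conic hulls of finite sets of nonzero vectors in ℝ^d whose open dual cones are both nonempty. Then C₁ ⊆ C₂ if and only if C₂^⊥ ⊆ C₁^⊥, where C^⊥ = {w : ⟨w, v⟩ < 0 for all v ∈ C, v ≠ 0}. -/
/-!
Conic Carathéodory: a point of the cone spanned by finitely many vectors is a nonnegative
combination of a linearly independent subfamily. The cone spanned by a linearly independent
family is the image of the closed orthant under a linear embedding, so a finitely generated cone
is a finite union of closed sets, hence closed.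

For a closed convex cone `K`, a point `x ∉ K` is strictly separated from `K` by some `y` with
`⟪y, x⟫ > 0 ≥ ⟪y, K⟫`; adding a small multiple of an element of the open negative dual of `K`
turns `y` into an element of that dual which is still positive at `x`. Hence if the open
negative dual of `K` is contained in that of `S`, no point of `S` lies outside `K`.
-/

open Set
open scoped InnerProductSpace

section Caratheodory

variable {ι E : Type*} [AddCommGroup E] [Module ℝ E]

lemma exists_nonneg_sum_smul_erase_eq [DecidableEq ι] {u : ι → E} {s : Finset ι} {β c : ι → ℝ}
    (hβ : ∀ i ∈ s, 0 ≤ β i) (hc : ∑ i ∈ s, c i • u i = 0) (hpos : ∃ i ∈ s, 0 < c i) :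
    ∃ j ∈ s, ∃ γ : ι → ℝ, (∀ i ∈ s.erase j, 0 ≤ γ i) ∧
      ∑ i ∈ s.erase j, γ i • u i = ∑ i ∈ s, β i • u i := by
  -- Subtract the largest multiple of `c` keeping all coefficients nonnegative.
  obtain ⟨j, hj, hmin⟩ := (s.filter (0 < c ·)).exists_min_image (fun i => β i / c i)
    (by simpa [Finset.Nonempty] using hpos)
  rw [Finset.mem_filter] at hj
  set t := β j / c j
  have ht : 0 ≤ t := div_nonneg (hβ j hj.1) hj.2.le
  refine ⟨j, hj.1, fun i => β i - t * c i, fun i hi => ?_, ?_⟩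
  · have hi := (Finset.mem_erase.mp hi).2
    rcases lt_or_ge 0 (c i) with hci | hci
    · have := hmin i (Finset.mem_filter.mpr ⟨hi, hci⟩)
      rw [le_div_iff₀ hci] at this
      linarith
    · nlinarith [hβ i hi]
  · have hγj : (β j - t * c j) • u j = 0 := by
      rw [div_mul_cancel₀ _ hj.2.ne', sub_self, zero_smul]
    rw [Finset.sum_erase (f := fun i => (β i - t * c i) • u i) s hγj]
    simp only [sub_smul, mul_smul, Finset.sum_sub_distrib, ← Finset.smul_sum, hc, smul_zero,
      sub_zero]

theorem exists_linearIndepOn_nonneg_sum_smul_eq (u : ι → E) (s : Finset ι) (β : ι → ℝ)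
    (hβ : ∀ i ∈ s, 0 ≤ β i) :
    ∃ t ⊆ s, LinearIndepOn ℝ u (t : Set ι) ∧
      ∃ γ : ι → ℝ, (∀ i ∈ t, 0 ≤ γ i) ∧ ∑ i ∈ t, γ i • u i = ∑ i ∈ s, β i • u i := by
  classical
  induction s using Finset.strongInduction generalizing β with
  | H s ih =>
    by_cases hs : LinearIndepOn ℝ u (s : Set ι)
    · exact ⟨s, subset_rfl, hs, β, hβ, rfl⟩
    obtain ⟨c, hc, i, hi, hci⟩ := not_linearIndepOn_finset_iff.mp hs
    obtain ⟨c', hc', hc'pos⟩ : ∃ c : ι → ℝ, ∑ i ∈ s, c i • u i = 0 ∧ ∃ i ∈ s, 0 < c i := by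
      rcases hci.lt_or_gt with hneg | hpos
      · exact ⟨-c, by simp [Finset.sum_neg_distrib, hc], i, hi, neg_pos.mpr hneg⟩
      · exact ⟨c, hc, i, hi, hpos⟩
    obtain ⟨j, hj, γ, hγ, hsum⟩ := exists_nonneg_sum_smul_erase_eq hβ hc' hc'pos
    obtain ⟨t, hts, ht, δ, hδ, hδsum⟩ := ih _ (Finset.erase_ssubset hj) γ hγ
    exact ⟨t, hts.trans (Finset.erase_subset _ _), ht, δ, hδ, hδsum.trans hsum⟩

end Caratheodory

namespace PointedCone

variable {ι E : Type*} [AddCommGroup E] [Module ℝ E] [Fintype ι]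

lemma mem_hull_range_iff {u : ι → E} {x : E} :
    x ∈ hull ℝ (range u) ↔ ∃ β : ι → ℝ, (∀ i, 0 ≤ β i) ∧ x = ∑ i, β i • u i := by
  rw [Submodule.mem_span_range_iff_exists_fun]
  constructor
  · rintro ⟨c, rfl⟩
    exact ⟨fun i => c i, fun i => (c i).2, rfl⟩
  · rintro ⟨β, hβ, rfl⟩
    exact ⟨fun i => ⟨β i, hβ i⟩, rfl⟩

lemma hull_range_eq_iUnion_linearIndepOn (u : ι → E) :
    (hull ℝ (range u) : Set E) =
      ⋃ (t : Finset ι) (_ : LinearIndepOn ℝ u (t : Set ι)), hull ℝ (range fun i : t => u i) := by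
  refine Subset.antisymm (fun x hx => ?_) (iUnion₂_subset fun t _ => ?_)
  · obtain ⟨β, hβ, rfl⟩ := mem_hull_range_iff.mp hx
    obtain ⟨t, -, ht, γ, hγ, hsum⟩ :=
      exists_linearIndepOn_nonneg_sum_smul_eq u Finset.univ β fun i _ => hβ i
    refine mem_iUnion₂.mpr ⟨t, ht, mem_hull_range_iff.mpr ⟨fun i => γ i, fun i => hγ i i.2, ?_⟩⟩
    rw [← hsum, ← t.sum_coe_sort]
  · exact Submodule.span_mono (range_subset_iff.mpr fun i => mem_range_self (i : ι))

variable [TopologicalSpace E] [IsTopologicalAddGroup E] [ContinuousSMul ℝ E] [T2Space E]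

lemma isClosed_hull_range_of_linearIndependent {v : ι → E} (hv : LinearIndependent ℝ v) :
    IsClosed (hull ℝ (range v) : Set E) := by
  have hL : LinearMap.ker (Fintype.linearCombination ℝ v) = ⊥ :=
    LinearMap.ker_eq_bot.mpr (linearIndependent_iff_injective_fintypeLinearCombination.mp hv)
  have himage : (hull ℝ (range v) : Set E) = Fintype.linearCombination ℝ v '' Ici 0 := by
    ext x
    simp only [SetLike.mem_coe, mem_hull_range_iff, mem_image, mem_Ici,
      Fintype.linearCombination_apply, Pi.le_def, Pi.zero_apply, eq_comm (a := x)]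
  rw [himage]
  exact (LinearMap.isClosedEmbedding_of_injective hL).isClosedMap _ isClosed_Ici

theorem isClosed_hull_range (u : ι → E) : IsClosed (hull ℝ (range u) : Set E) := by
  rw [hull_range_eq_iUnion_linearIndepOn]
  exact isClosed_iUnion_of_finite fun t => isClosed_iUnion_of_finite
    fun ht => isClosed_hull_range_of_linearIndependent ht

end PointedCone

section OpenNegDual

variable {E : Type*} [NormedAddCommGroup E] [InnerProductSpace ℝ E]

def openNegDual (S : Set E) : Set E := {w | ∀ x ∈ S, x ≠ 0 → ⟪w, x⟫_ℝ < 0}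

lemma openNegDual_anti {S T : Set E} (h : S ⊆ T) : openNegDual T ⊆ openNegDual S :=
  fun _ hw x hx => hw x (h hx)

variable [CompleteSpace E]

lemma ProperCone.exists_mem_openNegDual_inner_pos (K : ProperCone ℝ E) {x : E} (hx : x ∉ K)
    (hK : (openNegDual (K : Set E)).Nonempty) : ∃ w ∈ openNegDual (K : Set E), 0 < ⟪w, x⟫_ℝ := by
  obtain ⟨y, hyK, hyx⟩ := K.hyperplane_separation' hx
  obtain ⟨w₀, hw₀⟩ := hK
  -- Tilt the separating functional `-y` slightly towards `w₀` to make it strictly negative on `K`.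
  obtain ⟨ε, hε, hεx⟩ : ∃ ε > 0, 0 < ε * ⟪w₀, x⟫_ℝ - ⟪x, y⟫_ℝ := by
    have hden : 0 < |⟪w₀, x⟫_ℝ| + 1 := by positivity
    refine ⟨-⟪x, y⟫_ℝ / (|⟪w₀, x⟫_ℝ| + 1), div_pos (neg_pos.mpr hyx) hden, ?_⟩
    have := div_mul_cancel₀ (-⟪x, y⟫_ℝ) hden.ne'
    nlinarith [neg_abs_le ⟪w₀, x⟫_ℝ, div_pos (neg_pos.mpr hyx) hden]
  refine ⟨ε • w₀ - y, fun z hz hz0 => ?_, ?_⟩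
  · rw [inner_sub_left, real_inner_smul_left, real_inner_comm z y]
    nlinarith [hw₀ z hz hz0, hyK z hz]
  · rwa [inner_sub_left, real_inner_smul_left, real_inner_comm x y]

theorem subset_iff_openNegDual_subset {S : Set E} (K : ProperCone ℝ E)
    (hK : (openNegDual (K : Set E)).Nonempty) :
    S ⊆ K ↔ openNegDual (K : Set E) ⊆ openNegDual S := by
  refine ⟨openNegDual_anti, fun h x hxS => by_contra fun hxK => ?_⟩
  obtain ⟨w, hwK, hwx⟩ := K.exists_mem_openNegDual_inner_pos hxK hK
  have hx0 : x ≠ 0 := fun h0 => hxK (h0 ▸ K.zero_mem)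
  exact (h hwK x hxS hx0).not_gt hwx

end OpenNegDual

theorem stmt_8_general (d m : ℕ)
    (u : Fin m → EuclideanSpace ℝ (Fin d))
    (C₁ C₂ D₁ D₂ : Set (EuclideanSpace ℝ (Fin d)))
    (hC₂ : C₂ = {x | ∃ β : Fin m → ℝ, (∀ j, 0 ≤ β j) ∧ x = ∑ j, β j • u j})
    (hD₁ : D₁ = {w | ∀ x ∈ C₁, x ≠ 0 → (inner ℝ w x : ℝ) < 0})
    (hD₂ : D₂ = {w | ∀ x ∈ C₂, x ≠ 0 → (inner ℝ w x : ℝ) < 0})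
    (hD₂ne : D₂.Nonempty) :
    C₁ ⊆ C₂ ↔ D₂ ⊆ D₁ := by
  have hC₂_hull : C₂ = PointedCone.hull ℝ (range u) := by
    ext x
    rw [hC₂, SetLike.mem_coe, PointedCone.mem_hull_range_iff, mem_ofPred_eq]
  subst hC₂_hull hD₁ hD₂
  exact subset_iff_openNegDual_subset ⟨_, PointedCone.isClosed_hull_range u⟩ hD₂ne

theorem stmt_8 (d n m : ℕ)
    (v : Fin n → EuclideanSpace ℝ (Fin d)) (u : Fin m → EuclideanSpace ℝ (Fin d))
    (hv : ∀ i, v i ≠ 0) (hu : ∀ j, u j ≠ 0)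
    (C₁ C₂ D₁ D₂ : Set (EuclideanSpace ℝ (Fin d)))
    (hC₁ : C₁ = {x | ∃ α : Fin n → ℝ, (∀ i, 0 ≤ α i) ∧ x = ∑ i, α i • v i})
    (hC₂ : C₂ = {x | ∃ β : Fin m → ℝ, (∀ j, 0 ≤ β j) ∧ x = ∑ j, β j • u j})
    (hD₁ : D₁ = {w | ∀ x ∈ C₁, x ≠ 0 → (inner ℝ w x : ℝ) < 0})
    (hD₂ : D₂ = {w | ∀ x ∈ C₂, x ≠ 0 → (inner ℝ w x : ℝ) < 0})
    (hD₁ne : D₁.Nonempty) (hD₂ne : D₂.Nonempty) :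
    C₁ ⊆ C₂ ↔ D₂ ⊆ D₁ :=
  stmt_8_general d m u C₁ C₂ D₁ D₂ hC₂ hD₁ hD₂ hD₂ne
end

section
/- In the parametrized game with payoffs (T,L) → (1,4), (T,R) → (4−θ,1), (B,L) → (2,2), (B,R) → (3,3) and 0 ≤ θ < 1, the row player's expected utility at the mixed equilibrium (p_T = 1/4, p_L = (1−θ)/(2−θ)) equals V_row(θ) = (5 − 2θ)/(2 − θ), and dV_row/dθ = 1/(2−θ)² > 0, while the column player's equilibrium expected utility equals 5/2 independently of θ. -/
/-
At `q = (1 - θ) / (2 - θ)` the two rows earn the same, so the row player's payoff does not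
depend on `p` and equals `3 - q = (5 - 2θ) / (2 - θ)`; symmetrically, at `p = 1/4` the column
player is indifferent and earns `5/2` whatever `q` is.
-/

def Urow (θ p q : ℝ) : ℝ :=
  p * q * 1 + p * (1 - q) * (4 - θ) + (1 - p) * q * 2 + (1 - p) * (1 - q) * 3

def Ucol (p q : ℝ) : ℝ :=
  p * q * 4 + p * (1 - q) * 1 + (1 - p) * q * 2 + (1 - p) * (1 - q) * 3

theorem Urow_at_equilibrium_col_mix {θ : ℝ} (hθ : θ ≠ 2) (p : ℝ) :
    Urow θ p ((1 - θ) / (2 - θ)) = (5 - 2 * θ) / (2 - θ) := by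
  have hne : (2 : ℝ) - θ ≠ 0 := sub_ne_zero.mpr (Ne.symm hθ)
  unfold Urow
  field_simp
  ring

theorem Ucol_at_equilibrium_row_mix (q : ℝ) : Ucol (1/4) q = 5 / 2 := by
  unfold Ucol
  ring

theorem hasDerivAt_row_value {θ : ℝ} (hθ : θ ≠ 2) :
    HasDerivAt (fun t : ℝ => (5 - 2 * t) / (2 - t)) (1 / (2 - θ)^2) θ := by
  have hne : (2 : ℝ) - θ ≠ 0 := sub_ne_zero.mpr (Ne.symm hθ)
  have hnum : HasDerivAt (fun t : ℝ => 5 - 2 * t) (-2) θ := by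
    simpa using ((hasDerivAt_id θ).const_mul (2 : ℝ)).const_sub 5
  have hden : HasDerivAt (fun t : ℝ => 2 - t) (-1) θ := by
    simpa using (hasDerivAt_id θ).const_sub 2
  refine (hnum.div hden hne).congr_deriv ?_
  ring

theorem stmt_11_general (θ : ℝ) (hθ1 : θ < 1) :
    Urow θ (1/4) ((1 - θ) / (2 - θ)) = (5 - 2 * θ) / (2 - θ) ∧
    HasDerivAt (fun t : ℝ => (5 - 2 * t) / (2 - t)) (1 / (2 - θ)^2) θ ∧
    (0 : ℝ) < 1 / (2 - θ)^2 ∧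
    Ucol (1/4) ((1 - θ) / (2 - θ)) = 5 / 2 := by
  have hθ : θ ≠ 2 := by linarith
  have hpos : (0 : ℝ) < 2 - θ := by linarith
  exact ⟨Urow_at_equilibrium_col_mix hθ _, hasDerivAt_row_value hθ, by positivity,
    Ucol_at_equilibrium_row_mix _⟩

theorem stmt_11 (θ : ℝ) (hθ0 : 0 ≤ θ) (hθ1 : θ < 1) :
    Urow θ (1/4) ((1 - θ) / (2 - θ)) = (5 - 2 * θ) / (2 - θ) ∧
    HasDerivAt (fun t : ℝ => (5 - 2 * t) / (2 - t)) (1 / (2 - θ)^2) θ ∧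
    (0 : ℝ) < 1 / (2 - θ)^2 ∧
    Ucol (1/4) ((1 - θ) / (2 - θ)) = 5 / 2 :=
  stmt_11_general θ hθ1
end

section
/- Let v₁, …, vₙ, u be nonzero vectors in ℝ^d such that the open dual cone C^⊥ = {w : ⟨w,vᵢ⟩ < 0 ∀i} of C = Con({vᵢ}) is nonempty. Then −u ∉ C if and only if there exists w with ⟨w, vᵢ⟩ > 0 for all i and ⟨w, u⟩ > 0. -/
/-!
If no `w` is strictly positive on `u` and on every `vᵢ`, then `0` cannot be separated from the
polytope `conv ({u} ∪ {vᵢ})`, so `0 = a • u + b • y` with `y ∈ conv {vᵢ}` and `a + b = 1`. A vector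
`w₀` of the open dual cone keeps `0` out of `conv {vᵢ}`, which forces `a > 0` and hence
`-u = (b / a) • y ∈ C`. Conversely, a `w` positive on every `vᵢ` is nonnegative on `C`, so it
cannot be positive on `u` when `-u ∈ C`.
-/

open Set
open scoped RealInnerProductSpace

section Cone

variable {E : Type*} [AddCommGroup E] [Module ℝ E]

theorem PointedCone.mem_hull_range_iff_s16 {ι : Type*} [Fintype ι] {v : ι → E} {x : E} :
    x ∈ PointedCone.hull ℝ (range v) ↔ ∃ α : ι → ℝ, (∀ i, 0 ≤ α i) ∧ x = ∑ i, α i • v i := by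
  rw [PointedCone.hull, Submodule.mem_span_range_iff_exists_fun]
  constructor
  · rintro ⟨c, rfl⟩
    exact ⟨fun i ↦ c i, fun i ↦ (c i).2, rfl⟩
  · rintro ⟨α, hα, rfl⟩
    exact ⟨fun i ↦ ⟨α i, hα i⟩, rfl⟩

theorem PointedCone.neg_mem_hull_of_zero_mem_convexHull_insert {s : Set E} {u : E}
    (hs : (0 : E) ∉ convexHull ℝ s) (hu : (0 : E) ∈ convexHull ℝ (insert u s)) :
    -u ∈ PointedCone.hull ℝ s := by
  rcases s.eq_empty_or_nonempty with rfl | hne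
  · obtain rfl : u = 0 := by simpa [eq_comm] using hu
    simp
  rw [convexHull_insert hne, mem_convexJoin] at hu
  obtain ⟨x, hx, y, hy, a, b, ha, hb, hab, hzero⟩ := hu
  rw [mem_singleton_iff] at hx
  subst x
  have ha₀ : a ≠ 0 := by
    rintro rfl
    obtain rfl : b = 1 := by linarith
    simp only [zero_smul, one_smul, zero_add] at hzero
    exact hs (hzero ▸ hy)
  have hneg : -u = (b / a) • y :=
    calc -u = a⁻¹ • (a • -u) := (inv_smul_smul₀ ha₀ _).symm
      _ = a⁻¹ • (b • y) := by rw [smul_neg, neg_eq_of_add_eq_zero_right hzero]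
      _ = (b / a) • y := by rw [smul_smul, div_eq_inv_mul]
  have hy' : y ∈ PointedCone.hull ℝ s :=
    convexHull_min PointedCone.subset_hull (PointedCone.convex _) hy
  rw [hneg]
  exact (PointedCone.hull ℝ s).smul_mem (div_nonneg hb ha) hy'

end Cone

section InnerProductSpace

variable {E : Type*} [NormedAddCommGroup E] [InnerProductSpace ℝ E]

theorem zero_notMem_convexHull_of_forall_inner_neg {s : Set E} {w : E}
    (hw : ∀ x ∈ s, ⟪w, x⟫ < 0) : (0 : E) ∉ convexHull ℝ s := fun h ↦ by
  have h' : ⟪w, 0⟫ < 0 := convexHull_min hw (convex_halfSpace_lt (innerₗ E w).isLinear 0) h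
  simp at h'

theorem inner_nonneg_of_mem_hull {s : Set E} {w x : E} (hw : ∀ y ∈ s, 0 ≤ ⟪w, y⟫)
    (hx : x ∈ PointedCone.hull ℝ s) : 0 ≤ ⟪w, x⟫ := by
  induction hx using Submodule.span_induction with
  | mem y hy => exact hw y hy
  | zero => simp
  | add y z _ _ hy hz => rw [inner_add_right]; positivity
  | smul c y _ hy => exact (real_inner_smul_right w y c).symm ▸ mul_nonneg c.2 hy

theorem exists_forall_inner_pos_of_zero_notMem_convexHull [CompleteSpace E] {s : Set E}
    (hs : s.Finite) (h : (0 : E) ∉ convexHull ℝ s) : ∃ w : E, ∀ x ∈ s, 0 < ⟪w, x⟫ := by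
  obtain ⟨f, c, hf0, hfc⟩ := geometric_hahn_banach_point_closed (convex_convexHull ℝ s)
    (hs.isCompact_convexHull (𝕜 := ℝ)).isClosed h
  refine ⟨(InnerProductSpace.toDual ℝ E).symm f, fun x hx ↦ ?_⟩
  rw [InnerProductSpace.toDual_symm_apply]
  rw [map_zero] at hf0
  linarith [hfc x (subset_convexHull ℝ s hx)]

end InnerProductSpace

theorem stmt_16_general (d n : ℕ) (v : Fin n → EuclideanSpace ℝ (Fin d)) (u : EuclideanSpace ℝ (Fin d))
    (hdual : ∃ w₀ : EuclideanSpace ℝ (Fin d), ∀ i, (inner ℝ w₀ (v i) : ℝ) < 0) :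
    (¬ ∃ α : Fin n → ℝ, (∀ i, 0 ≤ α i) ∧ -u = ∑ i, α i • v i) ↔
      ∃ w : EuclideanSpace ℝ (Fin d),
        (∀ i, (0 : ℝ) < inner ℝ w (v i)) ∧ (0 : ℝ) < inner ℝ w u := by
  obtain ⟨w₀, hw₀⟩ := hdual
  rw [← PointedCone.mem_hull_range_iff_s16]
  constructor
  · intro hnotMem
    by_contra! hsep
    refine hnotMem (PointedCone.neg_mem_hull_of_zero_mem_convexHull_insert
      (zero_notMem_convexHull_of_forall_inner_neg (forall_mem_range.2 hw₀)) ?_)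
    by_contra h0
    obtain ⟨w, hw⟩ := exists_forall_inner_pos_of_zero_notMem_convexHull
      ((finite_range v).insert u) h0
    exact (hsep w fun i ↦ hw _ (mem_insert_of_mem _ (mem_range_self i))).not_gt
      (hw u (mem_insert u _))
  · rintro ⟨w, hwv, hwu⟩ hmem
    have := inner_nonneg_of_mem_hull (forall_mem_range.2 fun i ↦ (hwv i).le) hmem
    rw [inner_neg_right] at this
    linarith

theorem stmt_16 (d n : ℕ) (v : Fin n → EuclideanSpace ℝ (Fin d)) (u : EuclideanSpace ℝ (Fin d))
    (hv : ∀ i, v i ≠ 0) (hu : u ≠ 0)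
    (hdual : ∃ w₀ : EuclideanSpace ℝ (Fin d), ∀ i, (inner ℝ w₀ (v i) : ℝ) < 0) :
    (¬ ∃ α : Fin n → ℝ, (∀ i, 0 ≤ α i) ∧ -u = ∑ i, α i • v i) ↔
      ∃ w : EuclideanSpace ℝ (Fin d),
        (∀ i, (0 : ℝ) < inner ℝ w (v i)) ∧ (0 : ℝ) < inner ℝ w u :=
  stmt_16_general d n v u hdual
end
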